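/- Let 0 < s < 1 and 0 < α < 2s. There exists a constant C > 0 (depending only on s and α) such that for every integer n ≥ 4 one has ∑_{k+l=n, k≥2, l≥2} (μ_{k,l})² · l^{3/2+α} · k^{3/2+α} ≤ C · n^{2s+3/2+α}. -/

import Mathlib

/-!
Substituting `u = sin θ` and enlarging the range to `[0, 1]` bounds the integral in `μ_{k,l}` by
`∫₀¹ u^(2k-1-2s) (1-u²)^l du = l! / (2 ∏_{j ≤ l} (k - s + j))`. Weighted AM-GM,
`(k+j)^(1-s) (k+j-1)^s ≤ k+j-s`, bounds this product below by a telescoping one,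
`((k+l)!/(k-1)!) ((k-1)/(k+l))^s`. The factorial prefactor is a ratio of central binomial
coefficients, and `4^m / (2√m) ≤ C(2m, m) ≤ 4^m / √m` gives
`μ_{k,l}² ≲ (k+l)^(2s+1/2) k^(-2s-5/2) l^(-1/2)`. Hence the weighted sum over `k + l = n` is at
most a multiple of `n^(2s+3/2+α) ∑ k^(-(1+2s-α))`, a convergent series since `α < 2s`.
-/
open Real MeasureTheory Finset

/-- The coefficients `μ_{k,l}` in the expansion `Γ(φ_k, φ_l) = μ_{k,l} φ_{k+l}` of the
radially symmetric non-cutoff Boltzmann collision operator, for the model angular kernel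
`β(θ) = (sin θ)^{-1-2s} cos θ`. -/
noncomputable def boltzMu (s : ℝ) (k l : ℕ) : ℝ :=
  Real.sqrt ((Nat.factorial (2 * k + 2 * l + 1) : ℝ) /
      ((Nat.factorial (2 * k + 1) : ℝ) * (Nat.factorial (2 * l + 1) : ℝ))) *
    ∫ θ in (0:ℝ)..(Real.pi / 4),
      Real.sin θ ^ (2 * (k : ℝ) - 1 - 2 * s) * Real.cos θ ^ (2 * l + 1)

open scoped Nat

namespace Nat

theorem three_mul_add_one_mul_centralBinom_sq_le (n : ℕ) :
    (3 * n + 1) * centralBinom n ^ 2 ≤ 16 ^ n := by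
  induction n with
  | zero => simp
  | succ n ih =>
    have hrec := succ_mul_centralBinom_succ n
    refine Nat.le_of_mul_le_mul_left (c := (n + 1) ^ 2) ?_ (by positivity)
    calc (n + 1) ^ 2 * ((3 * (n + 1) + 1) * centralBinom (n + 1) ^ 2)
        = (3 * n + 4) * ((n + 1) * centralBinom (n + 1)) ^ 2 := by ring
      _ = (3 * n + 4) * (2 * (2 * n + 1)) ^ 2 * centralBinom n ^ 2 := by rw [hrec]; ring
      _ ≤ 16 * (n + 1) ^ 2 * ((3 * n + 1) * centralBinom n ^ 2) := by
          have : (3 * n + 4) * (2 * (2 * n + 1)) ^ 2 ≤ 16 * (n + 1) ^ 2 * (3 * n + 1) := by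
            ring_nf; omega
          calc _ ≤ 16 * (n + 1) ^ 2 * (3 * n + 1) * centralBinom n ^ 2 := by gcongr
            _ = _ := by ring
      _ ≤ 16 * (n + 1) ^ 2 * 16 ^ n := by gcongr
      _ = (n + 1) ^ 2 * 16 ^ (n + 1) := by ring

theorem sixteen_pow_le_four_mul_mul_centralBinom_sq {n : ℕ} (hn : 0 < n) :
    16 ^ n ≤ 4 * n * centralBinom n ^ 2 := by
  induction n with
  | zero => omega
  | succ n ih =>
    rcases Nat.eq_zero_or_pos n with rfl | hn
    · decide
    have hrec := succ_mul_centralBinom_succ n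
    refine Nat.le_of_mul_le_mul_left (c := n + 1) ?_ (by positivity)
    calc (n + 1) * 16 ^ (n + 1) = (n + 1) * 16 * 16 ^ n := by ring
      _ ≤ (n + 1) * 16 * (4 * n * centralBinom n ^ 2) := by gcongr; exact ih hn
      _ ≤ 4 * (2 * (2 * n + 1)) ^ 2 * centralBinom n ^ 2 := by
          have : (n + 1) * 16 * (4 * n) ≤ 4 * (2 * (2 * n + 1)) ^ 2 := by ring_nf; omega
          calc _ = (n + 1) * 16 * (4 * n) * centralBinom n ^ 2 := by ring
            _ ≤ _ := by gcongr
      _ = 4 * ((n + 1) * centralBinom (n + 1)) ^ 2 := by rw [hrec]; ring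
      _ = (n + 1) * (4 * (n + 1) * centralBinom (n + 1) ^ 2) := by ring

theorem factorial_two_mul_add_one (n : ℕ) :
    (2 * n + 1)! = (2 * n + 1) * centralBinom n * n ! * n ! := by
  rw [factorial_succ, centralBinom_eq_two_mul_choose, mul_assoc, mul_assoc,
    ← choose_mul_factorial_mul_factorial (by omega : n ≤ 2 * n), show 2 * n - n = n by omega]
  ring

end Nat

theorem sqrt_mul_centralBinom_le_four_pow (n : ℕ) : √n * Nat.centralBinom n ≤ (4 : ℝ) ^ n := by
  refine (pow_le_pow_iff_left₀ (by positivity) (by positivity) two_ne_zero).mp ?_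
  have h := Nat.three_mul_add_one_mul_centralBinom_sq_le n
  rw [mul_pow, sq_sqrt n.cast_nonneg, ← pow_mul, pow_mul', show (4 : ℝ) ^ 2 = 16 by norm_num]
  calc (n : ℝ) * Nat.centralBinom n ^ 2 ≤ (3 * n + 1 : ℕ) * Nat.centralBinom n ^ 2 := by
        gcongr; linarith [n.cast_nonneg (α := ℝ)]
    _ ≤ 16 ^ n := by exact_mod_cast h

theorem four_pow_le_two_mul_sqrt_mul_centralBinom {n : ℕ} (hn : 0 < n) :
    (4 : ℝ) ^ n ≤ 2 * √n * Nat.centralBinom n := by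
  refine (pow_le_pow_iff_left₀ (by positivity) (by positivity) two_ne_zero).mp ?_
  rw [mul_pow, mul_pow, sq_sqrt n.cast_nonneg, ← pow_mul, pow_mul',
    show (4 : ℝ) ^ 2 = 16 by norm_num]
  exact_mod_cast (Nat.sixteen_pow_le_four_mul_mul_centralBinom_sq hn).trans_eq (by ring)

theorem centralBinom_add_div_mul_le {k l : ℕ} (hk : 0 < k) (hl : 0 < l) :
    (Nat.centralBinom (k + l) : ℝ) / (Nat.centralBinom k * Nat.centralBinom l)
      ≤ 4 * √k * √l / √(k + l) := by
  have hkl := sqrt_mul_centralBinom_le_four_pow (k + l)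
  have hk' := four_pow_le_two_mul_sqrt_mul_centralBinom hk
  have hl' := four_pow_le_two_mul_sqrt_mul_centralBinom hl
  have := Nat.centralBinom_pos k
  have := Nat.centralBinom_pos l
  rw [div_le_div_iff₀ (by positivity) (sqrt_pos.mpr (by positivity))]
  push_cast at hkl
  rw [pow_add] at hkl
  calc (Nat.centralBinom (k + l) : ℝ) * √(k + l) ≤ 4 ^ k * 4 ^ l := by linarith
    _ ≤ (2 * √k * Nat.centralBinom k) * (2 * √l * Nat.centralBinom l) := by gcongr
    _ = _ := by ring

theorem odd_factorial_ratio_mul_sq_eq (k l : ℕ) :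
    ((2 * k + 2 * l + 1)! : ℝ) / ((2 * k + 1)! * (2 * l + 1)!) * (k ! * l ! / (k + l)!) ^ 2
      = (2 * (k + l) + 1) / ((2 * k + 1) * (2 * l + 1))
        * (Nat.centralBinom (k + l) / (Nat.centralBinom k * Nat.centralBinom l)) := by
  rw [show 2 * k + 2 * l + 1 = 2 * (k + l) + 1 by ring, Nat.factorial_two_mul_add_one,
    Nat.factorial_two_mul_add_one, Nat.factorial_two_mul_add_one]
  have := Nat.centralBinom_pos k
  have := Nat.centralBinom_pos l
  have := Nat.centralBinom_pos (k + l)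
  push_cast
  field_simp

theorem odd_factorial_ratio_mul_sq_le {k l : ℕ} (hk : 0 < k) (hl : 0 < l) :
    ((2 * k + 2 * l + 1)! : ℝ) / ((2 * k + 1)! * (2 * l + 1)!) * (k ! * l ! / (k + l)!) ^ 2
      ≤ 3 * √(k + l) / (√k * √l) := by
  rw [odd_factorial_ratio_mul_sq_eq]
  have hk' : (1 : ℝ) ≤ k := by exact_mod_cast hk
  have hl' : (1 : ℝ) ≤ l := by exact_mod_cast hl
  have hsk : 0 < √(k : ℝ) := sqrt_pos.mpr (by positivity)
  have hsl : 0 < √(l : ℝ) := sqrt_pos.mpr (by positivity)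
  have hskl : 0 < √(k + l : ℝ) := sqrt_pos.mpr (by positivity)
  calc _ ≤ 3 * (k + l) / (4 * k * l) * (4 * √k * √l / √(k + l)) := by
        gcongr ?_ * ?_
        · rw [div_le_div_iff₀ (by positivity) (by positivity)]
          nlinarith [mul_le_mul hk' hl' zero_le_one (by linarith)]
        · exact centralBinom_add_div_mul_le hk hl
    _ = 3 * √(k + l) / (√k * √l) := by
        field_simp
        rw [sq_sqrt (by positivity), sq_sqrt (by positivity), sq_sqrt (by positivity)]
        ring

theorem continuous_rpow_mul_one_sub_sq_pow {a : ℝ} (ha : 0 ≤ a) (l : ℕ) :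
    Continuous fun u : ℝ ↦ u ^ a * (1 - u ^ 2) ^ l := by
  fun_prop (disch := exact ha)

theorem integral_rpow_mul_one_sub_sq_pow_succ {a : ℝ} (ha : 0 ≤ a) (l : ℕ) :
    (a + 1) * ∫ u in (0 : ℝ)..1, u ^ a * (1 - u ^ 2) ^ (l + 1)
      = 2 * (l + 1) * ∫ u in (0 : ℝ)..1, u ^ (a + 2) * (1 - u ^ 2) ^ l := by
  have hderiv : ∀ u ∈ Set.uIcc (0 : ℝ) 1,
      HasDerivAt (fun u : ℝ ↦ u ^ (a + 1) * (1 - u ^ 2) ^ (l + 1))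
        ((a + 1) * (u ^ a * (1 - u ^ 2) ^ (l + 1))
          - 2 * (l + 1) * (u ^ (a + 2) * (1 - u ^ 2) ^ l)) u := by
    intro u hu
    rw [Set.uIcc_of_le zero_le_one] at hu
    have h1 : HasDerivAt (fun u : ℝ ↦ u ^ (a + 1)) ((a + 1) * u ^ a) u := by
      simpa using hasDerivAt_rpow_const (x := u) (p := a + 1) (Or.inr (by linarith))
    have h2 := ((hasDerivAt_pow 2 u).const_sub 1).pow (l + 1)
    refine (h1.mul h2).congr_deriv ?_
    rw [show a + 2 = a + 1 + 1 by ring, rpow_add_one' (y := a + 1) hu.1 (by linarith),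
      Pi.pow_apply]
    push_cast
    ring
  have hintegrable : ∀ b : ℝ, 0 ≤ b → ∀ m : ℕ,
      IntervalIntegrable (fun u : ℝ ↦ u ^ b * (1 - u ^ 2) ^ m) volume 0 1 :=
    fun b hb m ↦ (continuous_rpow_mul_one_sub_sq_pow hb m).intervalIntegrable _ _
  have hftc := intervalIntegral.integral_eq_sub_of_hasDerivAt hderiv
    (((hintegrable a ha _).const_mul _).sub ((hintegrable (a + 2) (by linarith) l).const_mul _))
  rw [intervalIntegral.integral_sub ((hintegrable a ha _).const_mul _)
    ((hintegrable (a + 2) (by linarith) l).const_mul _), intervalIntegral.integral_const_mul,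
    intervalIntegral.integral_const_mul, zero_rpow (by linarith)] at hftc
  norm_num at hftc
  linarith

theorem integral_rpow_mul_one_sub_sq_pow (l : ℕ) {a : ℝ} (ha : 0 ≤ a) :
    ∫ u in (0 : ℝ)..1, u ^ a * (1 - u ^ 2) ^ l
      = l ! / (2 * ∏ j ∈ range (l + 1), ((a + 1) / 2 + j)) := by
  induction l generalizing a with
  | zero =>
    simp only [pow_zero, mul_one, integral_rpow (Or.inl (by linarith : -1 < a)),
      zero_rpow (by linarith : a + 1 ≠ 0)]
    norm_num
  | succ l ih =>
    have hrec := integral_rpow_mul_one_sub_sq_pow_succ ha l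
    rw [ih (by linarith)] at hrec
    rw [prod_range_succ', Nat.factorial_succ]
    have : 0 < ∏ j ∈ range (l + 1), ((a + 1) / 2 + (j + 1 : ℕ)) :=
      prod_pos fun j _ ↦ by positivity
    have h' : ∏ j ∈ range (l + 1), ((a + 2 + 1) / 2 + j)
        = ∏ j ∈ range (l + 1), ((a + 1) / 2 + (j + 1 : ℕ)) :=
      prod_congr rfl fun j _ ↦ by push_cast; ring
    rw [h'] at hrec
    field_simp at hrec ⊢
    push_cast at hrec ⊢
    linarith

theorem integral_sin_rpow_mul_cos_pow {a : ℝ} (ha : 0 ≤ a) (l : ℕ) :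
    ∫ θ in (0 : ℝ)..(π / 4), sin θ ^ a * cos θ ^ (2 * l + 1)
      = ∫ u in (0 : ℝ)..(√2 / 2), u ^ a * (1 - u ^ 2) ^ l := by
  have hsubst := intervalIntegral.integral_comp_mul_deriv (a := 0) (b := π / 4)
    (fun θ _ ↦ hasDerivAt_sin θ) continuousOn_cos (continuous_rpow_mul_one_sub_sq_pow ha l)
  rw [sin_zero, sin_pi_div_four] at hsubst
  rw [← hsubst]
  refine intervalIntegral.integral_congr fun θ _ ↦ ?_
  rw [Function.comp_apply, pow_succ, pow_mul, cos_sq']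
  ring

theorem sq_integral_sin_rpow_mul_cos_pow_le {a : ℝ} (ha : 0 ≤ a) (l : ℕ) :
    (∫ θ in (0 : ℝ)..(π / 4), sin θ ^ a * cos θ ^ (2 * l + 1)) ^ 2
      ≤ (l ! / (2 * ∏ j ∈ range (l + 1), ((a + 1) / 2 + j))) ^ 2 := by
  have hnonneg : ∀ u ∈ Set.Icc (0 : ℝ) 1, 0 ≤ u ^ a * (1 - u ^ 2) ^ l := by
    rintro u ⟨hu0, hu1⟩
    have : 0 ≤ 1 - u ^ 2 := by nlinarith
    positivity
  have hsqrt : √2 / 2 ≤ 1 := by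
    rw [div_le_one two_pos, sqrt_le_left two_pos.le]; norm_num
  rw [integral_sin_rpow_mul_cos_pow ha, ← integral_rpow_mul_one_sub_sq_pow l ha]
  gcongr
  · exact intervalIntegral.integral_nonneg (by positivity) fun u hu ↦
      hnonneg u (Set.Icc_subset_Icc_right hsqrt hu)
  · refine intervalIntegral.integral_mono_interval le_rfl (by positivity) hsqrt ?_
      ((continuous_rpow_mul_one_sub_sq_pow ha l).intervalIntegrable _ _)
    filter_upwards [ae_restrict_mem measurableSet_Ioc] with u hu
    exact hnonneg u (Set.Ioc_subset_Icc_self hu)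

theorem mul_rpow_sub_one_le {y s : ℝ} (hy : 1 ≤ y) (hs0 : 0 ≤ s) (hs1 : s ≤ 1) :
    y * (y - 1) ^ s ≤ (y - s) * y ^ s :=
  calc y * (y - 1) ^ s = y ^ s * (y ^ (1 - s) * (y - 1) ^ s) := by
        rw [← mul_assoc, ← rpow_add (by linarith), add_sub_cancel, rpow_one]
    _ ≤ y ^ s * ((1 - s) * y + s * (y - 1)) := by
        gcongr
        exact geom_mean_le_arith_mean2_weighted (by linarith) hs0 (by linarith) (by linarith)
          (by ring)
    _ = (y - s) * y ^ s := by ring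

theorem prod_add_mul_rpow_le {x s : ℝ} (hx : 1 ≤ x) (hs0 : 0 ≤ s) (hs1 : s ≤ 1) (m : ℕ) :
    (∏ j ∈ range m, (x + j)) * (x - 1) ^ s
      ≤ (∏ j ∈ range m, (x - s + j)) * (x + m - 1) ^ s := by
  induction m with
  | zero => simp
  | succ m ih =>
    have hP : 0 ≤ ∏ j ∈ range m, (x - s + j) :=
      prod_nonneg fun j _ ↦ by linarith [j.cast_nonneg (α := ℝ)]
    have hm : (1 : ℝ) ≤ x + m := by linarith [m.cast_nonneg (α := ℝ)]
    calc (∏ j ∈ range (m + 1), (x + j)) * (x - 1) ^ s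
        = (x + m) * ((∏ j ∈ range m, (x + j)) * (x - 1) ^ s) := by rw [prod_range_succ]; ring
      _ ≤ (x + m) * ((∏ j ∈ range m, (x - s + j)) * (x + m - 1) ^ s) := by gcongr
      _ = (∏ j ∈ range m, (x - s + j)) * ((x + m) * (x + m - 1) ^ s) := by ring
      _ ≤ (∏ j ∈ range m, (x - s + j)) * ((x + m - s) * (x + m) ^ s) :=
        mul_le_mul_of_nonneg_left (mul_rpow_sub_one_le hm hs0 hs1) hP
      _ = (∏ j ∈ range (m + 1), (x - s + j)) * (x + ↑(m + 1) - 1) ^ s := by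
        rw [prod_range_succ]; push_cast; ring_nf

theorem factorial_mul_prod_range_add (k l : ℕ) :
    (k ! : ℝ) * ∏ j ∈ range (l + 1), ((k : ℝ) + j) = k * (k + l)! := by
  rw [prod_range_succ', ← Nat.factorial_mul_ascFactorial k l, Nat.ascFactorial_eq_prod_range]
  push_cast
  simp only [add_assoc, add_comm (1 : ℝ)]
  ring

theorem rpow_le_two_mul_sub_one_rpow {x s : ℝ} (hx : 2 ≤ x) (hs0 : 0 ≤ s) (hs1 : s ≤ 1) :
    x ^ s ≤ 2 * (x - 1) ^ s :=
  calc x ^ s ≤ (2 * (x - 1)) ^ s := rpow_le_rpow (by linarith) (by linarith) hs0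
    _ = 2 ^ s * (x - 1) ^ s := mul_rpow zero_le_two (by linarith)
    _ ≤ 2 * (x - 1) ^ s := by
      refine mul_le_mul_of_nonneg_right ?_ (rpow_nonneg (by linarith) _)
      simpa using rpow_le_rpow_of_exponent_le one_le_two hs1

theorem factorial_div_two_mul_prod_le {s : ℝ} (hs0 : 0 ≤ s) (hs1 : s ≤ 1) {k : ℕ} (hk : 2 ≤ k)
    (l : ℕ) :
    (l ! : ℝ) / (2 * ∏ j ∈ range (l + 1), ((k : ℝ) - s + j))
      ≤ k ! * l ! / (k + l)! * ((k + l) ^ s / k ^ (s + 1)) := by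
  have hk' : (2 : ℝ) ≤ k := by exact_mod_cast hk
  set P := ∏ j ∈ range (l + 1), ((k : ℝ) - s + j)
  set Q := ∏ j ∈ range (l + 1), ((k : ℝ) + j)
  have hP : 0 < P := prod_pos fun j _ ↦ by linarith [j.cast_nonneg (α := ℝ)]
  have hQ : Q = k * (k + l)! / k ! :=
    eq_div_of_mul_eq (by positivity) ((mul_comm _ _).trans (factorial_mul_prod_range_add k l))
  have hQP : Q * (k - 1) ^ s ≤ P * (k + l) ^ s := by
    have := prod_add_mul_rpow_le (x := k) (by linarith) hs0 hs1 (l + 1)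
    rwa [show (k : ℝ) + (l + 1 : ℕ) - 1 = k + l by push_cast; ring] at this
  have : 0 < (k - 1 : ℝ) ^ s := rpow_pos_of_pos (by linarith) s
  calc (l ! : ℝ) / (2 * P) ≤ l ! * (k + l) ^ s / (Q * (2 * (k - 1) ^ s)) := by
        rw [div_le_div_iff₀ (by positivity) (by rw [hQ]; positivity)]
        nlinarith
    _ ≤ l ! * (k + l) ^ s / (Q * k ^ s) := by
        rw [hQ]; gcongr; exact rpow_le_two_mul_sub_one_rpow hk' hs0 hs1
    _ = k ! * l ! / (k + l)! * ((k + l) ^ s / k ^ (s + 1)) := by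
        rw [hQ, rpow_add_one (by positivity)]
        field_simp

theorem boltzMu_sq_le {s : ℝ} (hs0 : 0 ≤ s) (hs1 : s ≤ 1) {k l : ℕ} (hk : 2 ≤ k) (hl : 1 ≤ l) :
    boltzMu s k l ^ 2 ≤ 3 * √(k + l) / (√k * √l) * ((k + l) ^ s / k ^ (s + 1)) ^ 2 := by
  have hk' : (2 : ℝ) ≤ k := by exact_mod_cast hk
  have hI := sq_integral_sin_rpow_mul_cos_pow_le (a := 2 * k - 1 - 2 * s) (by linarith) l
  rw [show ∏ j ∈ range (l + 1), ((2 * k - 1 - 2 * s + 1) / 2 + (j : ℝ))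
      = ∏ j ∈ range (l + 1), ((k : ℝ) - s + j) from prod_congr rfl fun j _ ↦ by ring] at hI
  have hP : 0 < ∏ j ∈ range (l + 1), ((k : ℝ) - s + j) :=
    prod_pos fun j _ ↦ by linarith [j.cast_nonneg (α := ℝ)]
  have hbound := factorial_div_two_mul_prod_le hs0 hs1 hk l
  rw [boltzMu, mul_pow, sq_sqrt (by positivity)]
  calc _ ≤ ((2 * k + 2 * l + 1)! : ℝ) / ((2 * k + 1)! * (2 * l + 1)!)
          * (k ! * l ! / (k + l)! * ((k + l) ^ s / k ^ (s + 1))) ^ 2 :=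
        mul_le_mul_of_nonneg_left (hI.trans (pow_le_pow_left₀ (by positivity) hbound 2))
          (by positivity)
    _ = ((2 * k + 2 * l + 1)! : ℝ) / ((2 * k + 1)! * (2 * l + 1)!) * (k ! * l ! / (k + l)!) ^ 2
          * ((k + l) ^ s / k ^ (s + 1)) ^ 2 := by ring
    _ ≤ _ := by gcongr; exact odd_factorial_ratio_mul_sq_le (by omega) (by omega)

theorem boltzMu_sq_mul_rpow_le {s α : ℝ} (hs0 : 0 ≤ s) (hs1 : s ≤ 1) (hα : -1 ≤ α) {k l : ℕ}
    (hk : 2 ≤ k) (hl : 1 ≤ l) :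
    boltzMu s k l ^ 2 * (l : ℝ) ^ ((3 : ℝ) / 2 + α) * (k : ℝ) ^ ((3 : ℝ) / 2 + α)
      ≤ 3 * ((k : ℝ) + l) ^ (2 * s + 3 / 2 + α) / (k : ℝ) ^ (1 + (2 * s - α)) := by
  have hk' : (0 : ℝ) < k := by positivity
  have hl' : (0 : ℝ) < l := by positivity
  have hkl : (0 : ℝ) < k + l := by positivity
  have hL : (l : ℝ) ^ ((3 : ℝ) / 2 + α) = √l * l ^ (1 + α) := by
    rw [sqrt_eq_rpow, ← rpow_add hl']; ring_nf
  have hK : (k : ℝ) ^ ((3 : ℝ) / 2 + α) * k ^ (1 + (2 * s - α)) = √k * (k ^ (s + 1)) ^ 2 := by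
    rw [sqrt_eq_rpow, ← rpow_natCast, ← rpow_mul hk'.le, ← rpow_add hk', ← rpow_add hk']; ring_nf
  have hN : ((k : ℝ) + l) ^ (2 * s + 1 / 2) = √(k + l) * ((k + l) ^ s) ^ 2 := by
    rw [sqrt_eq_rpow, ← rpow_natCast, ← rpow_mul hkl.le, ← rpow_add hkl]; ring_nf
  calc boltzMu s k l ^ 2 * (l : ℝ) ^ ((3 : ℝ) / 2 + α) * (k : ℝ) ^ ((3 : ℝ) / 2 + α)
      ≤ 3 * √(k + l) / (√k * √l) * ((k + l) ^ s / k ^ (s + 1)) ^ 2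
          * (l : ℝ) ^ ((3 : ℝ) / 2 + α) * (k : ℝ) ^ ((3 : ℝ) / 2 + α) := by
        gcongr; exact boltzMu_sq_le hs0 hs1 hk hl
    _ = 3 * ((k : ℝ) + l) ^ (2 * s + 1 / 2) * (l : ℝ) ^ (1 + α)
          / (k : ℝ) ^ (1 + (2 * s - α)) := by
        rw [eq_div_iff (by positivity), mul_assoc _ _ ((k : ℝ) ^ _), hK, hL, hN]
        field_simp
    _ ≤ 3 * ((k : ℝ) + l) ^ (2 * s + 1 / 2) * ((k : ℝ) + l) ^ (1 + α)
          / (k : ℝ) ^ (1 + (2 * s - α)) := by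
        gcongr <;> linarith
    _ = 3 * ((k : ℝ) + l) ^ (2 * s + 3 / 2 + α) / (k : ℝ) ^ (1 + (2 * s - α)) := by
        rw [mul_assoc, ← rpow_add hkl]; ring_nf

theorem sum_mu_sq_weighted_le_two (s α : ℝ) (hs : 0 < s) (hs1 : s < 1)
    (hα : 0 < α) (hαs : α < 2 * s) :
    ∃ C > 0, ∀ n : ℕ, 4 ≤ n →
      ∑ k ∈ Finset.Icc 2 (n - 2),
          (boltzMu s k (n - k)) ^ 2 * ((n - k : ℕ) : ℝ) ^ ((3:ℝ)/2 + α) *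
            (k : ℝ) ^ ((3:ℝ)/2 + α)
        ≤ C * (n : ℝ) ^ (2 * s + 3/2 + α) := by
  set p := 1 + (2 * s - α)
  have hsum : Summable fun k : ℕ ↦ 1 / (k : ℝ) ^ p := summable_one_div_nat_rpow.mpr (by linarith)
  refine ⟨3 * ∑' k : ℕ, 1 / (k : ℝ) ^ p,
    mul_pos three_pos (hsum.tsum_pos (fun k ↦ by positivity) 1 (by simp)), fun n _ ↦ ?_⟩
  calc _ ≤ ∑ k ∈ Icc 2 (n - 2), 3 * (n : ℝ) ^ (2 * s + 3 / 2 + α) * (1 / (k : ℝ) ^ p) := by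
        refine sum_le_sum fun k hk ↦ ?_
        obtain ⟨hk2, hkn⟩ := mem_Icc.mp hk
        have hkl : (k : ℝ) + (n - k : ℕ) = n := by
          rw [← Nat.cast_add, Nat.add_sub_cancel' (by omega)]
        rw [mul_one_div, ← hkl]
        exact boltzMu_sq_mul_rpow_le hs.le hs1.le (by linarith) hk2 (by omega)
    _ = 3 * (n : ℝ) ^ (2 * s + 3 / 2 + α) * ∑ k ∈ Icc 2 (n - 2), 1 / (k : ℝ) ^ p := by
        rw [mul_sum]
    _ ≤ 3 * (n : ℝ) ^ (2 * s + 3 / 2 + α) * ∑' k : ℕ, 1 / (k : ℝ) ^ p := by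
        gcongr; exact hsum.sum_le_tsum _ fun k _ ↦ by positivity
    _ = _ := by ring
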